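/- arXiv:1912.09626 — 2 statements merged into one kernel-verified Lean document; each statement's English description precedes it below -/
import Mathlib

section
/- Let T₁, ..., T_q be unit vectors in ℝⁿ (q ≥ 2) and let Q be the q × q matrix with entries Q_{ii} = q - 1 and Q_{ij} = -⟨T_i, T_j⟩ for i ≠ j. If the span of {T₁, ..., T_q} has dimension at least 2, then Q is invertible. -/
open scoped InnerProductSpace

theorem junction_matrix_invertible (n q : ℕ) (hq : 2 ≤ q)
    (T : Fin q → EuclideanSpace ℝ (Fin n)) (hT : ∀ i, ‖T i‖ = 1)
    (hspan : 2 ≤ Module.finrank ℝ (Submodule.span ℝ (Set.range T)))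
    (Q : Matrix (Fin q) (Fin q) ℝ)
    (hQ : ∀ i j, Q i j = if i = j then (q : ℝ) - 1 else -⟪T i, T j⟫_ℝ) :
    IsUnit Q := by
  rw [Matrix.isUnit_iff_isUnit_det, isUnit_iff_ne_zero]
  intro hdet
  obtain ⟨x, hx0, hxQ⟩ := Matrix.exists_mulVec_eq_zero_iff.2 hdet
  have hqpos : (0 : ℝ) < q := by positivity
  set v : EuclideanSpace ℝ (Fin n) := ∑ j, x j • T j with hv
  -- key identity: ⟪T i, v⟫ = q * x i
  have key : ∀ i, ⟪T i, v⟫_ℝ = q * x i := by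
    intro i
    have h := congrFun hxQ i
    simp only [Matrix.mulVec, dotProduct, Pi.zero_apply] at h
    have hsum : ∑ j, Q i j * x j = 0 := h
    have hexp : ∑ j, Q i j * x j
        = ((q : ℝ) - 1) * x i - (∑ j, ⟪T i, T j⟫_ℝ * x j - ⟪T i, T i⟫_ℝ * x i) := by
      have herase : ∑ j ∈ Finset.univ.erase i, Q i j * x j
          = -∑ j ∈ Finset.univ.erase i, ⟪T i, T j⟫_ℝ * x j := by
        rw [← Finset.sum_neg_distrib]
        refine Finset.sum_congr rfl fun j hj => ?_
        rw [hQ, if_neg (Ne.symm (Finset.ne_of_mem_erase hj)), neg_mul]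
      rw [← Finset.add_sum_erase _ _ (Finset.mem_univ i), herase,
          ← Finset.add_sum_erase _ (fun j => ⟪T i, T j⟫_ℝ * x j) (Finset.mem_univ i),
          hQ, if_pos rfl]
      ring
    have hTi : ⟪T i, T i⟫_ℝ = 1 := by
      rw [real_inner_self_eq_norm_mul_norm, hT i, one_mul]
    have hiv : ⟪T i, v⟫_ℝ = ∑ j, ⟪T i, T j⟫_ℝ * x j := by
      rw [hv, inner_sum]
      exact Finset.sum_congr rfl fun j _ => by
        rw [real_inner_smul_right]; ring
    rw [hexp, hTi, hiv.symm] at hsum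
    linarith
  -- ‖v‖² = q * ‖x‖²
  have hvv : ⟪v, v⟫_ℝ = q * ∑ i, x i ^ 2 := by
    nth_rewrite 1 [hv]
    rw [sum_inner, Finset.mul_sum]
    refine Finset.sum_congr rfl fun i _ => ?_
    rw [real_inner_smul_left, key i]; ring
  have hvne : v ≠ 0 := by
    intro h
    apply hx0
    funext i
    have := key i
    rw [h, inner_zero_right] at this
    have : (q : ℝ) * x i = 0 := this.symm
    have := (mul_eq_zero.1 this).resolve_left (ne_of_gt hqpos)
    simpa using this
  -- each |⟪T i, v⟫| = ‖T i‖ * ‖v‖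
  have hsq : ∀ i, ⟪T i, v⟫_ℝ ^ 2 ≤ ‖v‖ ^ 2 := by
    intro i
    have h := abs_real_inner_le_norm (T i) v
    have h2 : |⟪T i, v⟫_ℝ| ≤ ‖v‖ := by rw [hT i, one_mul] at h; exact h
    calc ⟪T i, v⟫_ℝ ^ 2 = |⟪T i, v⟫_ℝ| ^ 2 := (sq_abs _).symm
      _ ≤ ‖v‖ ^ 2 := by
          have := abs_nonneg ⟪T i, v⟫_ℝ
          nlinarith
  have hnormv : ‖v‖ ^ 2 = q * ∑ i, x i ^ 2 := by
    rw [← real_inner_self_eq_norm_sq, hvv]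
  have heach : ∀ i, ⟪T i, v⟫_ℝ ^ 2 = ‖v‖ ^ 2 := by
    by_contra hc
    push_neg at hc
    obtain ⟨i0, hi0⟩ := hc
    have hlt : ⟪T i0, v⟫_ℝ ^ 2 < ‖v‖ ^ 2 := lt_of_le_of_ne (hsq i0) hi0
    have hsumlt : ∑ i, ⟪T i, v⟫_ℝ ^ 2 < ∑ _i : Fin q, ‖v‖ ^ 2 :=
      Finset.sum_lt_sum (fun i _ => hsq i) ⟨i0, Finset.mem_univ i0, hlt⟩
    have hA : ∑ i, ⟪T i, v⟫_ℝ ^ 2 = q ^ 2 * ∑ i, x i ^ 2 := by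
      rw [Finset.mul_sum]
      refine Finset.sum_congr rfl fun i _ => ?_
      rw [key i]; ring
    have hB : ∑ _i : Fin q, ‖v‖ ^ 2 = q * (q * ∑ i, x i ^ 2) := by
      rw [Finset.sum_const, Finset.card_univ, Fintype.card_fin, hnormv, nsmul_eq_mul]
    rw [hA, hB] at hsumlt
    nlinarith
  -- Cauchy-Schwarz equality: each T i is a multiple of v
  have hmul : ∀ i, ∃ r : ℝ, T i = r • v := by
    intro i
    have h1 : |⟪v, T i⟫_ℝ| = ‖v‖ * ‖T i‖ := by
      rw [real_inner_comm, hT i, mul_one]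
      have := heach i
      have h2 : |⟪T i, v⟫_ℝ| ^ 2 = ‖v‖ ^ 2 := by rw [sq_abs]; exact this
      have := abs_nonneg ⟪T i, v⟫_ℝ
      nlinarith [norm_nonneg v]
    have hTne : T i ≠ 0 := by
      intro h; have := hT i; rw [h, norm_zero] at this; norm_num at this
    have := (norm_inner_eq_norm_iff (𝕜 := ℝ) hvne hTne).1 (by rwa [Real.norm_eq_abs])
    obtain ⟨r, _, hr⟩ := this
    exact ⟨r, hr⟩
  -- so span has dimension ≤ 1
  have hle : Submodule.span ℝ (Set.range T) ≤ Submodule.span ℝ {v} := by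
    rw [Submodule.span_le]
    rintro _ ⟨i, rfl⟩
    obtain ⟨r, hr⟩ := hmul i
    rw [hr]
    exact Submodule.smul_mem _ r (Submodule.mem_span_singleton_self v)
  have h1 : Module.finrank ℝ (Submodule.span ℝ (Set.range T))
      ≤ Module.finrank ℝ (Submodule.span ℝ ({v} : Set (EuclideanSpace ℝ (Fin n)))) :=
    Submodule.finrank_mono hle
  rw [finrank_span_singleton hvne] at h1
  omega
end

section
/- Let T₁, ..., T_q be unit vectors in ℝⁿ and Q the q × q matrix with Q_{ii} = q - 1 and Q_{ij} = -⟨T_i, T_j⟩ for i ≠ j. If w ∈ ℝ^q satisfies Qw = 0, ‖w‖_∞ ≤ 1, and w_j = 1 for some index j, then q - 1 = ∑_{i ≠ j} w_i ⟨T_i, T_j⟩, and hence |⟨T_i, T_j⟩| = 1 and w_i = ⟨T_i, T_j⟩ for all i ≠ j. -/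
open scoped InnerProductSpace

theorem junction_matrix_kernel (n q : ℕ) (hq : 2 ≤ q)
    (T : Fin q → EuclideanSpace ℝ (Fin n)) (hT : ∀ i, ‖T i‖ = 1)
    (Q : Matrix (Fin q) (Fin q) ℝ)
    (hQ : ∀ i j, Q i j = if i = j then (q : ℝ) - 1 else -⟪T i, T j⟫_ℝ)
    (w : Fin q → ℝ) (hw : Q.mulVec w = 0) (hwbound : ∀ i, |w i| ≤ 1)
    (j : Fin q) (hwj : w j = 1) :
    ((q : ℝ) - 1 = ∑ i ∈ Finset.univ.erase j, w i * ⟪T i, T j⟫_ℝ) ∧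
      ∀ i, i ≠ j → |⟪T i, T j⟫_ℝ| = 1 ∧ w i = ⟪T i, T j⟫_ℝ := by
  have hcs : ∀ i : Fin q, |⟪T i, T j⟫_ℝ| ≤ 1 := by
    intro i
    have := abs_real_inner_le_norm (T i) (T j)
    simpa [hT] using this
  have h0 : (Q.mulVec w) j = 0 := by rw [hw]; rfl
  have hsum : ∑ i, Q j i * w i = 0 := by
    simpa [Matrix.mulVec, dotProduct] using h0
  have hsplit : Q j j * w j + ∑ i ∈ Finset.univ.erase j, Q j i * w i = 0 := by
    rw [Finset.add_sum_erase Finset.univ (fun i => Q j i * w i) (Finset.mem_univ j)]; exact hsum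
  have hmain : ((q : ℝ) - 1) = ∑ i ∈ Finset.univ.erase j, w i * ⟪T i, T j⟫_ℝ := by
    have : ∑ i ∈ Finset.univ.erase j, Q j i * w i
        = -∑ i ∈ Finset.univ.erase j, w i * ⟪T i, T j⟫_ℝ := by
      rw [← Finset.sum_neg_distrib]
      refine Finset.sum_congr rfl ?_
      intro i hi
      have hij : j ≠ i := (Finset.ne_of_mem_erase hi).symm
      rw [hQ j i, if_neg hij, real_inner_comm]
      ring
    rw [this, hQ j j, if_pos rfl, hwj] at hsplit
    linarith
  refine ⟨hmain, ?_⟩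
  have hcard : (Finset.univ.erase j).card = q - 1 := by
    simp [Finset.card_erase_of_mem]
  have hcardR : ((Finset.univ.erase j).card : ℝ) = (q : ℝ) - 1 := by
    rw [hcard]
    have : (1:ℕ) ≤ q := by omega
    push_cast [this]
    ring
  have hle : ∀ i ∈ Finset.univ.erase j, w i * ⟪T i, T j⟫_ℝ ≤ 1 := by
    intro i _
    calc w i * ⟪T i, T j⟫_ℝ ≤ |w i * ⟪T i, T j⟫_ℝ| := le_abs_self _
      _ = |w i| * |⟪T i, T j⟫_ℝ| := abs_mul _ _
      _ ≤ 1 * 1 := mul_le_mul (hwbound i) (hcs i) (abs_nonneg _) zero_le_one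
      _ = 1 := one_mul 1
  have heach : ∀ i ∈ Finset.univ.erase j, w i * ⟪T i, T j⟫_ℝ = 1 := by
    have hsum1 : ∑ i ∈ Finset.univ.erase j, w i * ⟪T i, T j⟫_ℝ
        = ∑ _i ∈ Finset.univ.erase j, (1:ℝ) := by
      rw [Finset.sum_const, nsmul_eq_mul, mul_one, hcardR, ← hmain]
    exact fun i hi => (Finset.sum_eq_sum_iff_of_le hle).mp hsum1 i hi
  intro i hij
  have hi : i ∈ Finset.univ.erase j := Finset.mem_erase.mpr ⟨hij, Finset.mem_univ i⟩
  have h1 := heach i hi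
  set c := ⟪T i, T j⟫_ℝ with hc
  have habs : |c| = 1 := by
    have h1' : |w i| * |c| = 1 := by rw [← abs_mul, h1, abs_one]
    have hwi : |w i| ≤ 1 := hwbound i
    have hci : |c| ≤ 1 := hcs i
    nlinarith [abs_nonneg (w i), abs_nonneg c]
  have hc2 : c * c = 1 := by
    rcases abs_eq (by norm_num : (0:ℝ) ≤ 1) |>.mp habs with h | h <;> rw [h] <;> ring
  refine ⟨habs, ?_⟩
  have : w i * c * c = c := by rw [h1]; ring
  rw [mul_assoc, hc2, mul_one] at this
  exact this
end
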